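/- arXiv:2511.18073 — 3 statements merged into one kernel-verified Lean document; each statement's English description precedes it below -/
import Mathlib

section
/- Let k be a field and q ∈ k. Then the center of the deformed incidence algebra I_q(T²_s) is trivial: it consists exactly of the scalar multiples of the identity, i.e. Z(I_q(T²_s)) = k·1 is 1-dimensional over k. -/
/-!
The face idempotents `e v` form a complete orthogonal family and every arrow strictly increases
the size of the face, so no nonzero path returns to its start: every corner `e v * x * e v` is a
scalar multiple of `e v`. A central element is therefore `∑ v, c v • e v`, and commuting with an
arrow `v → w` forces `c v = c w` once the arrow is known to be nonzero. For that, send each arrow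
to `ε` times a matrix unit in `Matrix TorusFace TorusFace k[ε]`: the deformation relations are
quadratic in the arrows and `ε² = 0`, so they hold for every `q`. The Hasse diagram of the face
poset is connected, so `c` is constant.
-/

/-! ### The deformed incidence algebra `I_q(T²_s)` of the simplicial torus -/

/-- Faces of the 7-vertex triangulation of the torus (vertex set `ZMod 7`): the 7 singletons,
the 21 two-element subsets (edges), and the 14 triangles `{i, i+1, i+3}` and `{i, i+2, i+3}`. -/
def IsTorusFace (s : Finset (ZMod 7)) : Prop :=
  s.card = 1 ∨ s.card = 2 ∨ ∃ i : ZMod 7, s = {i, i + 1, i + 3} ∨ s = {i, i + 2, i + 3}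

instance : DecidablePred IsTorusFace := fun s => by unfold IsTorusFace; infer_instance

/-- The vertices of the quiver: the 42 faces of the triangulation. -/
def TorusFace : Type := {s : Finset (ZMod 7) // IsTorusFace s}

instance : DecidableEq TorusFace := inferInstanceAs (DecidableEq {s : Finset (ZMod 7) // IsTorusFace s})
instance : Fintype TorusFace := inferInstanceAs (Fintype {s : Finset (ZMod 7) // IsTorusFace s})

/-- The arrows of the quiver: inclusions of a face into a face of one higher dimension,
i.e. the 42 arrows `α^a_E : {a} → E` and the 42 arrows `β^E_T : E → T`. -/
def TorusArrow : Type :=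
  {p : TorusFace × TorusFace // p.1.val ⊆ p.2.val ∧ p.2.val.card = p.1.val.card + 1}

instance : DecidableEq TorusArrow :=
  inferInstanceAs (DecidableEq {p : TorusFace × TorusFace //
    p.1.val ⊆ p.2.val ∧ p.2.val.card = p.1.val.card + 1})

/-- Generators of the free algebra: one generator for each vertex (the idempotent `e_v`)
and one for each arrow. -/
def TorusGen : Type := TorusFace ⊕ TorusArrow

variable (k : Type) [Field k]

/-- The idempotent generator attached to a face. -/
noncomputable def eGen (v : TorusFace) : FreeAlgebra k TorusGen :=
  FreeAlgebra.ι k (Sum.inl v)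

/-- The generator attached to an arrow. -/
noncomputable def aGen (x : TorusArrow) : FreeAlgebra k TorusGen :=
  FreeAlgebra.ι k (Sum.inr x)

/-- `(a, b, c)` is a positively oriented corner of a triangle of the triangulation:
the triangle is `{a, b, c}`, the corner is at `a`, and the direction from the edge `{a, b}` to
the edge `{a, c}` is positive for the chosen orientation of the torus.  The positive cyclic
orders are `(i, i+1, i+3)` on the triangles `T¹_i` and `(i, i+3, i+2)` on the triangles
`T²_i`. -/
def PosCorner (a b c : ZMod 7) : Prop :=
  ∃ i : ZMod 7,
    (a, b, c) = (i, i + 1, i + 3) ∨ (a, b, c) = (i + 1, i + 3, i) ∨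
    (a, b, c) = (i + 3, i, i + 1) ∨ (a, b, c) = (i, i + 3, i + 2) ∨
    (a, b, c) = (i + 3, i + 2, i) ∨ (a, b, c) = (i + 2, i, i + 3)

instance : ∀ a b c : ZMod 7, Decidable (PosCorner a b c) := fun a b c => by
  unfold PosCorner; infer_instance

lemma posCorner_facts : ∀ a b c : ZMod 7, PosCorner a b c →
    IsTorusFace {a} ∧ IsTorusFace {a, b} ∧ IsTorusFace {a, c} ∧ IsTorusFace {a, b, c} ∧
    ({a} : Finset (ZMod 7)) ⊆ {a, b} ∧ ({a} : Finset (ZMod 7)) ⊆ {a, c} ∧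
    ({a, b} : Finset (ZMod 7)) ⊆ {a, b, c} ∧ ({a, c} : Finset (ZMod 7)) ⊆ {a, b, c} ∧
    ({a} : Finset (ZMod 7)).card = 1 ∧
    ({a, b} : Finset (ZMod 7)).card = 2 ∧ ({a, c} : Finset (ZMod 7)).card = 2 ∧
    ({a, b, c} : Finset (ZMod 7)).card = 3 := by decide

/-- The arrow `α^a_{{a,b}}` attached to a positively oriented corner. -/
noncomputable def alphaB (a b c : ZMod 7) (h : PosCorner a b c) : TorusArrow :=
  ⟨(⟨{a}, ((posCorner_facts a b c h).1)⟩, ⟨{a, b}, ((posCorner_facts a b c h).2.1)⟩), ((posCorner_facts a b c h).2.2.2.2.1), by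
      show ({a, b} : Finset (ZMod 7)).card = ({a} : Finset (ZMod 7)).card + 1
      have h1 := (posCorner_facts a b c h).2.2.2.2.2.2.2.2.2.1
      have h2 := (posCorner_facts a b c h).2.2.2.2.2.2.2.2.1
      omega⟩

/-- The arrow `α^a_{{a,c}}` attached to a positively oriented corner. -/
noncomputable def alphaC (a b c : ZMod 7) (h : PosCorner a b c) : TorusArrow :=
  ⟨(⟨{a}, ((posCorner_facts a b c h).1)⟩, ⟨{a, c}, ((posCorner_facts a b c h).2.2.1)⟩), ((posCorner_facts a b c h).2.2.2.2.2.1), by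
      show ({a, c} : Finset (ZMod 7)).card = ({a} : Finset (ZMod 7)).card + 1
      have h1 := (posCorner_facts a b c h).2.2.2.2.2.2.2.2.2.2.1
      have h2 := (posCorner_facts a b c h).2.2.2.2.2.2.2.2.1
      omega⟩

/-- The arrow `β^{{a,b}}_{{a,b,c}}` attached to a positively oriented corner. -/
noncomputable def betaB (a b c : ZMod 7) (h : PosCorner a b c) : TorusArrow :=
  ⟨(⟨{a, b}, ((posCorner_facts a b c h).2.1)⟩, ⟨{a, b, c}, ((posCorner_facts a b c h).2.2.2.1)⟩), ((posCorner_facts a b c h).2.2.2.2.2.2.1), by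
      show ({a, b, c} : Finset (ZMod 7)).card = ({a, b} : Finset (ZMod 7)).card + 1
      have h1 := (posCorner_facts a b c h).2.2.2.2.2.2.2.2.2.2.2
      have h2 := (posCorner_facts a b c h).2.2.2.2.2.2.2.2.2.1
      omega⟩

/-- The arrow `β^{{a,c}}_{{a,b,c}}` attached to a positively oriented corner. -/
noncomputable def betaC (a b c : ZMod 7) (h : PosCorner a b c) : TorusArrow :=
  ⟨(⟨{a, c}, ((posCorner_facts a b c h).2.2.1)⟩, ⟨{a, b, c}, ((posCorner_facts a b c h).2.2.2.1)⟩), ((posCorner_facts a b c h).2.2.2.2.2.2.2.1), by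
      show ({a, b, c} : Finset (ZMod 7)).card = ({a, c} : Finset (ZMod 7)).card + 1
      have h1 := (posCorner_facts a b c h).2.2.2.2.2.2.2.2.2.2.2
      have h2 := (posCorner_facts a b c h).2.2.2.2.2.2.2.2.2.2.1
      omega⟩

/-- The defining relations of the deformed incidence algebra `I_q(T²_s)`: the vertex generators
are orthogonal idempotents summing to `1`, each arrow `x : v → w` satisfies
`x = e_w * x * e_v`, and for every positively oriented corner `(a, b, c)` of a triangle,
`β^{{a,b}}_{{a,b,c}} α^a_{{a,b}} = q • β^{{a,c}}_{{a,b,c}} α^a_{{a,c}}`. -/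
inductive TorusRel (q : k) : FreeAlgebra k TorusGen → FreeAlgebra k TorusGen → Prop
  | idem (v : TorusFace) : TorusRel q (eGen k v * eGen k v) (eGen k v)
  | orth (v w : TorusFace) (h : v ≠ w) : TorusRel q (eGen k v * eGen k w) 0
  | sum_one : TorusRel q (∑ v : TorusFace, eGen k v) 1
  | supp (x : TorusArrow) :
      TorusRel q (aGen k x) (eGen k x.val.2 * aGen k x * eGen k x.val.1)
  | deform (a b c : ZMod 7) (h : PosCorner a b c) :
      TorusRel q (aGen k (betaB a b c h) * aGen k (alphaB a b c h))
        (q • (aGen k (betaC a b c h) * aGen k (alphaC a b c h)))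

/-- The deformed incidence algebra `I_q(T²_s)`. -/
noncomputable def DeformedTorusAlgebra (q : k) : Type := RingQuot (TorusRel k q)

noncomputable instance (q : k) : Ring (DeformedTorusAlgebra k q) :=
  inferInstanceAs (Ring (RingQuot (TorusRel k q)))

noncomputable instance (q : k) : Algebra k (DeformedTorusAlgebra k q) :=
  inferInstanceAs (Algebra k (RingQuot (TorusRel k q)))

namespace CompleteOrthogonalIdempotents

variable {R A I : Type*} [CommSemiring R] [Semiring A] [Algebra R A] [Fintype I]
  {e : I → A}

theorem sum_sum_mul_mul (he : CompleteOrthogonalIdempotents e) (x : A) :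
    ∑ i, ∑ j, e i * x * e j = x := by
  simp only [← Finset.mul_sum, ← Finset.sum_mul, he.complete, one_mul, mul_one]

theorem mul_mul_eq_zero_of_commute (he : CompleteOrthogonalIdempotents e) {z : A}
    (hz : ∀ g, g * z = z * g) {i j : I} (hij : i ≠ j) : e i * z * e j = 0 := by
  rw [hz, mul_assoc, he.ortho hij, mul_zero]

theorem eq_sum_smul_of_commute (he : CompleteOrthogonalIdempotents e) {z : A}
    (hz : ∀ g, g * z = z * g) {c : I → R} (hc : ∀ i, e i * z * e i = c i • e i) :
    z = ∑ i, c i • e i := by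
  conv_lhs => rw [← he.sum_sum_mul_mul z]
  refine Finset.sum_congr rfl fun i _ => ?_
  rw [Finset.sum_eq_single i (fun j _ hji => he.mul_mul_eq_zero_of_commute hz hji.symm)
    (fun h => absurd (Finset.mem_univ i) h), hc]

theorem sum_smul_mul_of_mul_eq (he : CompleteOrthogonalIdempotents e) (c : I → R) {i : I} {a : A}
    (ha : e i * a = a) : (∑ j, c j • e j) * a = c i • a := by
  rw [Finset.sum_mul, Finset.sum_eq_single i, smul_mul_assoc, ha]
  · intro j _ hji
    rw [smul_mul_assoc, ← ha, ← mul_assoc, he.ortho hji, zero_mul, smul_zero]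
  · exact fun h => absurd (Finset.mem_univ i) h

theorem mul_sum_smul_of_mul_eq (he : CompleteOrthogonalIdempotents e) (c : I → R) {i : I} {a : A}
    (ha : a * e i = a) : a * (∑ j, c j • e j) = c i • a := by
  rw [Finset.mul_sum, Finset.sum_eq_single i, mul_smul_comm, ha]
  · intro j _ hji
    rw [mul_smul_comm, ← ha, mul_assoc, he.ortho hji.symm, mul_zero, smul_zero]
  · exact fun h => absurd (Finset.mem_univ i) h

theorem eq_of_commute_sum_smul {R : Type*} [Field R] {A : Type*} [Ring A] [Algebra R A]
    {e : I → A} (he : CompleteOrthogonalIdempotents e) {c : I → R}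
    (hc : ∀ g, g * (∑ j, c j • e j) = (∑ j, c j • e j) * g) {i j : I} {a : A}
    (ha : e i * a * e j = a) (ha0 : a ≠ 0) : c i = c j := by
  have hleft : e i * a = a := by
    rw [← ha, ← mul_assoc, ← mul_assoc, (he.idem i).eq]
  have hright : a * e j = a := by
    rw [← ha, mul_assoc, (he.idem j).eq]
  have h := hc a
  rw [he.mul_sum_smul_of_mul_eq c hright, he.sum_smul_mul_of_mul_eq c hleft, ← sub_eq_zero,
    ← sub_smul, smul_eq_zero] at h
  exact (sub_eq_zero.mp (h.resolve_right ha0)).symm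

variable {ι : Type*} [LinearOrder ι]

variable (R) in
def scalarCornerSubalgebra (he : CompleteOrthogonalIdempotents e) (r : I → ι) :
    Subalgebra R A where
  carrier := {x | ∀ i j, r i ≤ r j → e i * x * e j ∈ R ∙ (e i * e j)}
  mul_mem' {x y} hx hy i j hij := by
    have hsplit : e i * (x * y) * e j = ∑ u, (e i * x * e u) * (e u * y * e j) := by
      calc e i * (x * y) * e j = ∑ u, e i * x * e u * y * e j := by
            rw [← Finset.sum_mul, ← Finset.sum_mul, ← Finset.mul_sum, he.complete, mul_one]
            simp only [mul_assoc]
        _ = _ := Finset.sum_congr rfl fun u _ => by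
            conv_lhs => rw [← (he.idem u).eq]
            simp only [mul_assoc]
    rw [hsplit]
    refine Submodule.sum_mem _ fun u _ => ?_
    rcases le_or_gt (r i) (r u) with hiu | hui
    · obtain ⟨c, hc⟩ := Submodule.mem_span_singleton.mp (hx i u hiu)
      rw [← hc]
      by_cases hiu : i = u
      · subst hiu
        rw [(he.idem i).eq, smul_mul_assoc, ← mul_assoc, ← mul_assoc, (he.idem i).eq]
        exact Submodule.smul_mem _ c (hy i j hij)
      · rw [he.ortho hiu, smul_zero, zero_mul]; exact Submodule.zero_mem _
    · obtain ⟨c, hc⟩ := Submodule.mem_span_singleton.mp (hy u j (hui.le.trans hij))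
      rw [← hc, he.ortho (ne_of_apply_ne r (hui.trans_le hij).ne), smul_zero, mul_zero]
      exact Submodule.zero_mem _
  add_mem' hx hy i j hij := by
    rw [mul_add, add_mul]; exact Submodule.add_mem _ (hx i j hij) (hy i j hij)
  algebraMap_mem' c i j _ := by
    rw [Algebra.algebraMap_eq_smul_one, mul_smul_comm, mul_one, smul_mul_assoc]
    exact Submodule.smul_mem _ c (Submodule.mem_span_singleton_self _)

variable {r : I → ι}

theorem mem_scalarCornerSubalgebra (he : CompleteOrthogonalIdempotents e) (u : I) :
    e u ∈ scalarCornerSubalgebra R he r := fun i j _ => by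
  by_cases hiu : i = u
  · subst hiu
    rw [(he.idem i).eq]; exact Submodule.mem_span_singleton_self _
  · rw [he.ortho hiu, zero_mul]; exact Submodule.zero_mem _

theorem mem_scalarCornerSubalgebra_of_mul_mul_eq (he : CompleteOrthogonalIdempotents e)
    {a : A} {i j : I} (ha : e i * a * e j = a) (hr : r j < r i) :
    a ∈ scalarCornerSubalgebra R he r := fun i' j' hij' => by
  rw [← ha]
  by_cases hi : i' = i
  · by_cases hj : j = j'
    · subst hi hj; exact absurd hij' (not_le.mpr hr)
    · simp only [mul_assoc, he.ortho hj, mul_zero, Submodule.zero_mem]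
  · simp only [← mul_assoc, he.ortho hi, zero_mul, Submodule.zero_mem]

theorem mul_mul_self_mem_span_of_adjoin_eq_top (he : CompleteOrthogonalIdempotents e)
    (r : I → ι) {s : Set A} (hs : ∀ a ∈ s, ∃ i j, r j < r i ∧ e i * a * e j = a)
    (htop : Algebra.adjoin R (Set.range e ∪ s) = ⊤) (x : A) (i : I) :
    e i * x * e i ∈ R ∙ e i := by
  have hle : Algebra.adjoin R (Set.range e ∪ s) ≤ scalarCornerSubalgebra R he r := by
    refine Algebra.adjoin_le (Set.union_subset ?_ fun a ha => ?_)
    · rintro _ ⟨u, rfl⟩; exact he.mem_scalarCornerSubalgebra u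
    · obtain ⟨i, j, hr, ha⟩ := hs a ha
      exact he.mem_scalarCornerSubalgebra_of_mul_mul_eq ha hr
  have hx := hle (htop ▸ Algebra.mem_top : x ∈ Algebra.adjoin R (Set.range e ∪ s)) i i le_rfl
  rwa [(he.idem i).eq] at hx

end CompleteOrthogonalIdempotents

namespace Matrix

open scoped DualNumber

theorem single_eps_mul_single_eps {R n : Type*} [Semiring R] [Fintype n] [DecidableEq n]
    (i j j' l : n) : single i j (ε : R[ε]) * single j' l ε = 0 := by
  by_cases h : j = j'
  · rw [h, single_mul_single_same, DualNumber.eps_mul_eps, single_zero]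
  · exact single_mul_single_of_ne (h := h) ..

end Matrix

namespace TorusFace

theorem card_eq_one_or_two_or_three (F : TorusFace) :
    F.val.card = 1 ∨ F.val.card = 2 ∨ F.val.card = 3 := by
  have htri : ∀ i : ZMod 7,
      ({i, i + 1, i + 3} : Finset (ZMod 7)).card = 3 ∧
        ({i, i + 2, i + 3} : Finset (ZMod 7)).card = 3 := by decide
  rcases F.prop with h | h | ⟨i, h | h⟩
  · exact Or.inl h
  · exact Or.inr (Or.inl h)
  · exact Or.inr (Or.inr (h ▸ (htri i).1))
  · exact Or.inr (Or.inr (h ▸ (htri i).2))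

def vertex (a : ZMod 7) : TorusFace := ⟨{a}, Or.inl (Finset.card_singleton a)⟩

instance : Nonempty TorusFace := ⟨vertex 0⟩

theorem apply_eq_of_subset {β : Type*} {f : TorusFace → β}
    (hf : ∀ x : TorusArrow, f x.val.1 = f x.val.2) {F G : TorusFace} (hFG : F.val ⊆ G.val)
    (hcard : G.val.card = F.val.card + 1) : f F = f G :=
  hf ⟨(F, G), hFG, hcard⟩

theorem apply_eq_apply_vertex {β : Type*} {f : TorusFace → β}
    (hf : ∀ x : TorusArrow, f x.val.1 = f x.val.2) {F : TorusFace} {a : ZMod 7}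
    (ha : a ∈ F.val) : f F = f (vertex a) := by
  have hsub : (vertex a).val ⊆ F.val := Finset.singleton_subset_iff.mpr ha
  have hvertex : (vertex a).val.card = 1 := Finset.card_singleton a
  rcases F.card_eq_one_or_two_or_three with h | h | h
  · exact congrArg f (Subtype.ext (Finset.eq_of_subset_of_card_le hsub (by omega)).symm)
  · exact (apply_eq_of_subset hf hsub (by omega)).symm
  · obtain ⟨b, hb, hba⟩ := Finset.exists_mem_ne (by omega : 1 < F.val.card) a
    have hcard : ({a, b} : Finset (ZMod 7)).card = 2 := Finset.card_pair hba.symm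
    let E : TorusFace := ⟨{a, b}, Or.inr (Or.inl hcard)⟩
    have hvE : (vertex a).val ⊆ E.val :=
      Finset.singleton_subset_iff.mpr (Finset.mem_insert_self a _)
    have hEF : E.val ⊆ F.val := Finset.insert_subset ha (Finset.singleton_subset_iff.mpr hb)
    calc f F = f E := (apply_eq_of_subset hf hEF (by simp only [E]; omega)).symm
      _ = f (vertex a) := (apply_eq_of_subset hf hvE (by simp only [E]; omega)).symm

theorem apply_eq_apply {β : Type*} {f : TorusFace → β}
    (hf : ∀ x : TorusArrow, f x.val.1 = f x.val.2) (F G : TorusFace) : f F = f G := by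
  have hne : ∀ H : TorusFace, H.val.Nonempty := fun H =>
    Finset.card_pos.mp (by rcases H.card_eq_one_or_two_or_three with h | h | h <;> omega)
  obtain ⟨a, ha⟩ := hne F
  obtain ⟨b, hb⟩ := hne G
  rw [apply_eq_apply_vertex hf ha, apply_eq_apply_vertex hf hb]
  by_cases hab : a = b
  · rw [hab]
  let E : TorusFace := ⟨{a, b}, Or.inr (Or.inl (Finset.card_pair hab))⟩
  have haE : a ∈ E.val := Finset.mem_insert_self a {b}
  have hbE : b ∈ E.val := Finset.mem_insert_of_mem (Finset.mem_singleton_self b)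
  rw [← apply_eq_apply_vertex hf haE, ← apply_eq_apply_vertex hf hbE]

end TorusFace

namespace DeformedTorusAlgebra

open scoped DualNumber

variable {k : Type} [Field k] (q : k)

noncomputable def mk : FreeAlgebra k TorusGen →ₐ[k] DeformedTorusAlgebra k q :=
  RingQuot.mkAlgHom k (TorusRel k q)

noncomputable def e (v : TorusFace) : DeformedTorusAlgebra k q := mk q (eGen k v)

noncomputable def arrow (x : TorusArrow) : DeformedTorusAlgebra k q := mk q (aGen k x)

theorem mk_eq_of_rel {x y : FreeAlgebra k TorusGen} (h : TorusRel k q x y) : mk q x = mk q y :=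
  RingQuot.mkAlgHom_rel k h

theorem completeOrthogonalIdempotents_e : CompleteOrthogonalIdempotents (e q) where
  idem v := by
    show e q v * e q v = e q v
    rw [e, ← map_mul]; exact mk_eq_of_rel q (TorusRel.idem v)
  ortho v w h := by
    show e q v * e q w = 0
    rw [e, e, ← map_mul, ← map_zero (mk q)]; exact mk_eq_of_rel q (TorusRel.orth v w h)
  complete := by
    simp only [e, ← map_sum, ← map_one (mk q)]; exact mk_eq_of_rel q TorusRel.sum_one

theorem e_mul_arrow_mul_e (x : TorusArrow) :
    e q x.val.2 * arrow q x * e q x.val.1 = arrow q x := by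
  rw [e, e, arrow, ← map_mul, ← map_mul]; exact (mk_eq_of_rel q (TorusRel.supp x)).symm

theorem adjoin_range_e_union_range_arrow :
    Algebra.adjoin k (Set.range (e q) ∪ Set.range (arrow q)) = ⊤ := by
  have hgen : Set.range (e q) ∪ Set.range (arrow q) = mk q '' Set.range (FreeAlgebra.ι k) := by
    rw [← Set.range_comp, ← Set.Sum.elim_range]
    exact congrArg Set.range (funext fun g => by cases g <;> rfl)
  rw [hgen, Algebra.adjoin_image, FreeAlgebra.adjoin_range_ι, Algebra.map_top,
    AlgHom.range_eq_top]
  exact RingQuot.mkAlgHom_surjective k (TorusRel k q)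

variable (k) in
noncomputable def dualNumberMatrixGen : TorusGen → Matrix TorusFace TorusFace k[ε] :=
  Sum.elim (fun v => Matrix.single v v 1) (fun x => Matrix.single x.val.2 x.val.1 ε)

theorem lift_dualNumberMatrixGen_eGen (v : TorusFace) :
    FreeAlgebra.lift k (dualNumberMatrixGen k) (eGen k v) = Matrix.single v v 1 :=
  FreeAlgebra.lift_ι_apply _ _

theorem lift_dualNumberMatrixGen_aGen (x : TorusArrow) :
    FreeAlgebra.lift k (dualNumberMatrixGen k) (aGen k x) = Matrix.single x.val.2 x.val.1 ε :=
  FreeAlgebra.lift_ι_apply _ _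

theorem lift_dualNumberMatrixGen_eq_of_rel ⦃x y : FreeAlgebra k TorusGen⦄
    (h : TorusRel k q x y) :
    FreeAlgebra.lift k (dualNumberMatrixGen k) x =
      FreeAlgebra.lift k (dualNumberMatrixGen k) y := by
  cases h with
  | idem v =>
    rw [map_mul, lift_dualNumberMatrixGen_eGen, Matrix.single_mul_single_same, mul_one]
  | orth v w h =>
    rw [map_mul, lift_dualNumberMatrixGen_eGen, lift_dualNumberMatrixGen_eGen, map_zero,
      Matrix.single_mul_single_of_ne (h := h)]
  | sum_one =>
    simp only [map_sum, lift_dualNumberMatrixGen_eGen, Matrix.sum_single_one, map_one]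
  | supp x =>
    rw [map_mul, map_mul, lift_dualNumberMatrixGen_eGen, lift_dualNumberMatrixGen_eGen,
      lift_dualNumberMatrixGen_aGen, Matrix.single_mul_single_same, Matrix.single_mul_single_same,
      one_mul, mul_one]
  | deform a b c h =>
    simp only [map_mul, map_smul, lift_dualNumberMatrixGen_aGen, Matrix.single_eps_mul_single_eps,
      smul_zero]

noncomputable def toDualNumberMatrix :
    DeformedTorusAlgebra k q →ₐ[k] Matrix TorusFace TorusFace k[ε] :=
  RingQuot.liftAlgHom k
    ⟨FreeAlgebra.lift k (dualNumberMatrixGen k), lift_dualNumberMatrixGen_eq_of_rel q⟩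

theorem toDualNumberMatrix_mk (x : FreeAlgebra k TorusGen) :
    toDualNumberMatrix q (mk q x) = FreeAlgebra.lift k (dualNumberMatrixGen k) x :=
  RingQuot.liftAlgHom_mkAlgHom_apply _ _ _ _

theorem arrow_ne_zero (x : TorusArrow) : arrow q x ≠ 0 := fun h => by
  have hx := toDualNumberMatrix_mk q (aGen k x)
  rw [← arrow, h, map_zero, lift_dualNumberMatrixGen_aGen] at hx
  have hε := congrArg TrivSqZeroExt.snd (congrFun (congrFun hx x.val.2) x.val.1)
  rw [Matrix.zero_apply, Matrix.single_apply_same, DualNumber.snd_eps,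
    TrivSqZeroExt.snd_zero] at hε
  exact zero_ne_one hε

instance : Nontrivial (DeformedTorusAlgebra k q) :=
  (toDualNumberMatrix q).toRingHom.domain_nontrivial

end DeformedTorusAlgebra

set_option synthInstance.maxHeartbeats 1000000

/-- For any field `k` and any `q ∈ k`, the center of the deformed incidence
algebra `I_q(T²_s)` is trivial: it consists exactly of the scalar multiples of the identity
(i.e. it is the image of `k`, the bottom subalgebra), and is `1`-dimensional over `k`. -/
theorem center_deformed_simplicial_torus_trivial
    (k : Type) [Field k] (q : k) :
    Subalgebra.center k (DeformedTorusAlgebra k q) = ⊥ ∧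
    Module.finrank k (Subalgebra.center k (DeformedTorusAlgebra k q)) = 1 := by
  open DeformedTorusAlgebra in
  have hcenter : Subalgebra.center k (DeformedTorusAlgebra k q) = ⊥ := by
    have he := completeOrthogonalIdempotents_e q
    refine le_bot_iff.mp fun z hz => ?_
    rw [Subalgebra.mem_center_iff] at hz
    have hcorner := he.mul_mul_self_mem_span_of_adjoin_eq_top (fun v => v.val.card)
      (by rintro _ ⟨x, rfl⟩; exact ⟨_, _, by rw [x.prop.2]; omega, e_mul_arrow_mul_e q x⟩)
      (adjoin_range_e_union_range_arrow q) z
    choose c hc using fun v => Submodule.mem_span_singleton.mp (hcorner v)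
    have hz_eq : z = ∑ v, c v • e q v := he.eq_sum_smul_of_commute hz fun v => (hc v).symm
    have hc_arrow : ∀ x : TorusArrow, c x.val.1 = c x.val.2 := fun x =>
      (he.eq_of_commute_sum_smul (hz_eq ▸ hz) (e_mul_arrow_mul_e q x) (arrow_ne_zero q x)).symm
    have hc_const : ∀ v, c v = c (TorusFace.vertex 0) := fun v =>
      TorusFace.apply_eq_apply hc_arrow v _
    rw [Algebra.mem_bot, hz_eq]
    refine ⟨c (TorusFace.vertex 0), ?_⟩
    simp only [hc_const, ← Finset.smul_sum, he.complete, Algebra.algebraMap_eq_smul_one]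
  exact ⟨hcenter, by rw [hcenter]; exact Subalgebra.finrank_bot⟩
end

section
/- Let k be a field and Ψ ∈ sl₂(k)⊗sl₂(k). Then the deformed algebra (Λ⊗Λ)_Ψ is 16-dimensional over k (the same dimension as the undeformed algebra Λ⊗_k Λ); a basis is given by the four vertex idempotents, the eight arrows, and the four irreducible paths y_t^{(2)} x_s^{(1)} (s, t ∈ {0,1}). -/
/-! ### The deformed algebra `(Λ ⊗ Λ)_Ψ` -/

/-- Generators presenting `(Λ⊗Λ)_Ψ`: one generator for each of the four vertices `(i, j)`,
`i, j ∈ Fin 2`, and one for each of the eight arrows.  The arrow `(false, s, j)` is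
`x_s^{(j)} : (0, j) → (1, j)` and `(true, s, i)` is `y_s^{(i)} : (i, 0) → (i, 1)`,
for `s ∈ Fin 2` (columns and rows of the `2 × 2` grid are numbered `0, 1`). -/
def DGen : Type := (Fin 2 × Fin 2) ⊕ (Bool × Fin 2 × Fin 2)

variable (k : Type) [Field k]

/-- The idempotent generator attached to a vertex of the quiver. -/
noncomputable def dE (v : Fin 2 × Fin 2) : FreeAlgebra k DGen := FreeAlgebra.ι k (Sum.inl v)

/-- The arrow `x_s^{(j)}`. -/
noncomputable def dX (s j : Fin 2) : FreeAlgebra k DGen :=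
  FreeAlgebra.ι k (Sum.inr (false, s, j))

/-- The arrow `y_s^{(i)}`. -/
noncomputable def dY (s i : Fin 2) : FreeAlgebra k DGen :=
  FreeAlgebra.ι k (Sum.inr (true, s, i))

/-- The generator attached to an arrow. -/
noncomputable def dA (a : Bool × Fin 2 × Fin 2) : FreeAlgebra k DGen :=
  FreeAlgebra.ι k (Sum.inr a)

/-- The source of an arrow. -/
def dSrc : Bool × Fin 2 × Fin 2 → Fin 2 × Fin 2
  | (false, _, j) => (0, j)
  | (true, _, i) => (i, 0)

/-- The target of an arrow. -/
def dTgt : Bool × Fin 2 × Fin 2 → Fin 2 × Fin 2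
  | (false, _, j) => (1, j)
  | (true, _, i) => (i, 1)

variable (N : ℕ) (A B : Fin N → Matrix (Fin 2) (Fin 2) k)

/-- The defining relations of `(Λ⊗Λ)_Ψ` for `Ψ = Σ_m A_m ⊗ B_m`: the vertex generators are
orthogonal idempotents summing to `1`, each arrow `a : v → w` satisfies `a = e_w a e_v`, and
for all `s, t`:
`x_s^{(2)} y_t^{(1)} = y_t^{(2)} x_s^{(1)} + Σ_{u,v} (Σ_m (A_m)_{us} (B_m)_{vt}) y_v^{(2)} x_u^{(1)}`
(the superscripts `(1), (2)` are the indices `0, 1 : Fin 2`). -/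
inductive DRel : FreeAlgebra k DGen → FreeAlgebra k DGen → Prop
  | idem (v : Fin 2 × Fin 2) : DRel (dE k v * dE k v) (dE k v)
  | orth (v w : Fin 2 × Fin 2) (h : v ≠ w) : DRel (dE k v * dE k w) 0
  | sum_one : DRel (∑ v : Fin 2 × Fin 2, dE k v) 1
  | supp (a : Bool × Fin 2 × Fin 2) :
      DRel (dA k a) (dE k (dTgt a) * dA k a * dE k (dSrc a))
  | deform (s t : Fin 2) :
      DRel (dX k s 1 * dY k t 0)
        (dY k t 1 * dX k s 0 +
          ∑ u : Fin 2, ∑ v : Fin 2, (∑ m, A m u s * B m v t) • (dY k v 1 * dX k u 0))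

/-- The deformed algebra `(Λ⊗Λ)_Ψ`, for `Ψ = Σ_m A_m ⊗ B_m ∈ sl₂ ⊗ sl₂`. -/
noncomputable def DeformedKronecker : Type := RingQuot (DRel k N A B)

noncomputable instance : Ring (DeformedKronecker k N A B) :=
  inferInstanceAs (Ring (RingQuot (DRel k N A B)))

noncomputable instance : Algebra k (DeformedKronecker k N A B) :=
  inferInstanceAs (Algebra k (RingQuot (DRel k N A B)))

/-- The claimed basis of `(Λ⊗Λ)_Ψ`: the four vertex idempotents, the eight arrows, and the
four irreducible paths `y_t^{(2)} x_s^{(1)}`. -/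
noncomputable def deformedKroneckerBasisFamily (N : ℕ)
    (A B : Fin N → Matrix (Fin 2) (Fin 2) k) :
    (Fin 2 × Fin 2) ⊕ (Bool × Fin 2 × Fin 2) ⊕ (Fin 2 × Fin 2) →
      DeformedKronecker k N A B
  | Sum.inl v => RingQuot.mkAlgHom k (DRel k N A B) (dE k v)
  | Sum.inr (Sum.inl a) => RingQuot.mkAlgHom k (DRel k N A B) (dA k a)
  | Sum.inr (Sum.inr (s, t)) => RingQuot.mkAlgHom k (DRel k N A B) (dY k t 1 * dX k s 0)

/-! The deformed relation rewrites each path `x^{(2)} y^{(1)}` as a combination of the paths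
`y^{(2)} x^{(1)}`, and every other product of two arrows vanishes for lack of composability, so the
span of the sixteen listed elements is stable under left multiplication by the generators and
contains `1`; hence it is everything. For independence, write down on `k^16` the matrices that
left multiplication by the generators would have in that basis, check the defining relations for
them, and read coordinates off the image of the unit.
-/

theorem Submodule.eq_top_of_one_mem_of_generators_mul_mem {R A : Type*} [CommSemiring R]
    [Semiring A] [Algebra R A] {s : Set A} (hs : Algebra.adjoin R s = ⊤) (M : Submodule R A)
    (hone : 1 ∈ M) (hmul : ∀ g ∈ s, ∀ m ∈ M, g * m ∈ M) : M = ⊤ := by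
  have hleft (x : A) : ∀ m ∈ M, x * m ∈ M := by
    have hx : x ∈ Algebra.adjoin R s := hs ▸ Algebra.mem_top
    induction hx using Algebra.adjoin_induction with
    | mem g hg => exact hmul g hg
    | algebraMap r => exact fun m hm => by rw [← Algebra.smul_def]; exact M.smul_mem r hm
    | add x y _ _ hx hy => exact fun m hm => by rw [add_mul]; exact M.add_mem (hx m hm) (hy m hm)
    | mul x y _ _ hx hy => exact fun m hm => by rw [mul_assoc]; exact hx _ (hy m hm)
  exact eq_top_iff.mpr fun x _ => mul_one x ▸ hleft x 1 hone

theorem Matrix.single_mul_single_eq_ite {n R : Type*} [Fintype n] [DecidableEq n] [Semiring R]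
    (i j j' l : n) (c d : R) :
    Matrix.single i j c * Matrix.single j' l d =
      if j = j' then Matrix.single i l (c * d) else 0 := by
  split_ifs with h
  · rw [h, Matrix.single_mul_single_same]
  · exact Matrix.single_mul_single_of_ne (h := h) ..

namespace DeformedKronecker

abbrev Index : Type := (Fin 2 × Fin 2) ⊕ (Bool × Fin 2 × Fin 2) ⊕ (Fin 2 × Fin 2)

section Quotient

variable {k} {N} {A B}

noncomputable def mk : FreeAlgebra k DGen →ₐ[k] DeformedKronecker k N A B :=
  RingQuot.mkAlgHom k (DRel k N A B)

theorem mk_rel {x y : FreeAlgebra k DGen} (h : DRel k N A B x y) :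
    (mk x : DeformedKronecker k N A B) = mk y :=
  RingQuot.mkAlgHom_rel k h

noncomputable def vertex (v : Fin 2 × Fin 2) : DeformedKronecker k N A B := mk (dE k v)

noncomputable def arrow (a : Bool × Fin 2 × Fin 2) : DeformedKronecker k N A B := mk (dA k a)

def psiCoeff (A B : Fin N → Matrix (Fin 2) (Fin 2) k) (u v s t : Fin 2) : k :=
  ∑ m, A m u s * B m v t

theorem vertex_mul_vertex (v w : Fin 2 × Fin 2) :
    (vertex v : DeformedKronecker k N A B) * vertex w = if v = w then vertex v else 0 := by
  rw [vertex, vertex, ← map_mul]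
  split_ifs with h
  · subst h; exact mk_rel (DRel.idem v)
  · rw [mk_rel (DRel.orth v w h), map_zero]

theorem sum_vertex : ∑ v, (vertex v : DeformedKronecker k N A B) = 1 := by
  have h := mk_rel (k := k) (N := N) (A := A) (B := B) DRel.sum_one
  rwa [map_sum, map_one] at h

theorem vertex_mul_arrow_mul_vertex (a : Bool × Fin 2 × Fin 2) :
    vertex (dTgt a) * arrow a * vertex (dSrc a) = (arrow a : DeformedKronecker k N A B) := by
  rw [vertex, vertex, arrow, ← map_mul, ← map_mul]
  exact (mk_rel (DRel.supp a)).symm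

theorem vertex_mul_arrow (w : Fin 2 × Fin 2) (a : Bool × Fin 2 × Fin 2) :
    (vertex w : DeformedKronecker k N A B) * arrow a = if w = dTgt a then arrow a else 0 := by
  conv_lhs => rw [← vertex_mul_arrow_mul_vertex a]
  rw [← mul_assoc, ← mul_assoc, vertex_mul_vertex]
  split_ifs with h
  · rw [h, vertex_mul_arrow_mul_vertex]
  · rw [zero_mul, zero_mul]

theorem arrow_mul_vertex (a : Bool × Fin 2 × Fin 2) (w : Fin 2 × Fin 2) :
    (arrow a : DeformedKronecker k N A B) * vertex w = if dSrc a = w then arrow a else 0 := by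
  conv_lhs => rw [← vertex_mul_arrow_mul_vertex a]
  rw [mul_assoc, vertex_mul_vertex]
  split_ifs with h
  · subst h; exact vertex_mul_arrow_mul_vertex a
  · rw [mul_zero]

theorem arrow_mul_arrow_of_ne {a a' : Bool × Fin 2 × Fin 2} (h : dSrc a ≠ dTgt a') :
    (arrow a : DeformedKronecker k N A B) * arrow a' = 0 := by
  rw [← vertex_mul_arrow_mul_vertex a', ← mul_assoc, ← mul_assoc, arrow_mul_vertex, if_neg h,
    zero_mul, zero_mul]

theorem arrow_x_mul_arrow_y (s t : Fin 2) :
    (arrow (false, s, 1) : DeformedKronecker k N A B) * arrow (true, t, 0) =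
      arrow (true, t, 1) * arrow (false, s, 0) +
        ∑ u, ∑ v, psiCoeff A B u v s t • (arrow (true, v, 1) * arrow (false, u, 0)) := by
  have h := mk_rel (k := k) (N := N) (A := A) (B := B) (DRel.deform s t)
  simp only [map_mul, map_add, map_sum, map_smul] at h
  exact h

theorem basisFamily_path (s t : Fin 2) :
    deformedKroneckerBasisFamily k N A B (.inr (.inr (s, t))) =
      arrow (true, t, 1) * arrow (false, s, 0) :=
  map_mul _ _ _

theorem dSrc_eq_dTgt_iff (a a' : Bool × Fin 2 × Fin 2) :
    dSrc a = dTgt a' ↔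
      (∃ s t, a = (true, t, 1) ∧ a' = (false, s, 0)) ∨
        ∃ s t, a = (false, s, 1) ∧ a' = (true, t, 0) := by
  revert a a'; decide

theorem dSrc_ne_one_one (a : Bool × Fin 2 × Fin 2) : dSrc a ≠ (1, 1) := by
  revert a; decide

local notation "span_basis" => Submodule.span k (Set.range (deformedKroneckerBasisFamily k N A B))

theorem basisFamily_mem_span (i : Index) : deformedKroneckerBasisFamily k N A B i ∈ span_basis :=
  Submodule.subset_span ⟨i, rfl⟩

theorem ite_mem_span {p : Prop} [Decidable p] {x : DeformedKronecker k N A B}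
    (hx : x ∈ span_basis) : (if p then x else 0) ∈ span_basis := by
  split_ifs
  exacts [hx, zero_mem _]

theorem vertex_mul_basisFamily_mem_span (v : Fin 2 × Fin 2) (i : Index) :
    vertex v * deformedKroneckerBasisFamily k N A B i ∈ span_basis := by
  rcases i with w | a | ⟨s, t⟩
  · change vertex v * vertex w ∈ span_basis
    rw [vertex_mul_vertex]
    exact ite_mem_span (basisFamily_mem_span (.inl v))
  · change vertex v * arrow a ∈ span_basis
    rw [vertex_mul_arrow]
    exact ite_mem_span (basisFamily_mem_span (.inr (.inl a)))
  · rw [basisFamily_path, ← mul_assoc, vertex_mul_arrow, ite_mul, zero_mul, ← basisFamily_path]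
    exact ite_mem_span (basisFamily_mem_span _)

theorem arrow_mul_basisFamily_mem_span (a : Bool × Fin 2 × Fin 2) (i : Index) :
    arrow a * deformedKroneckerBasisFamily k N A B i ∈ span_basis := by
  rcases i with w | a' | ⟨s, t⟩
  · change arrow a * vertex w ∈ span_basis
    rw [arrow_mul_vertex]
    exact ite_mem_span (basisFamily_mem_span (.inr (.inl a)))
  · change arrow a * arrow a' ∈ span_basis
    by_cases h : dSrc a = dTgt a'
    · rcases (dSrc_eq_dTgt_iff a a').mp h with ⟨s, t, rfl, rfl⟩ | ⟨s, t, rfl, rfl⟩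
      · rw [← basisFamily_path]
        exact basisFamily_mem_span _
      · rw [arrow_x_mul_arrow_y, ← basisFamily_path]
        refine add_mem (basisFamily_mem_span _) (sum_mem fun u _ => sum_mem fun v _ => ?_)
        rw [← basisFamily_path]
        exact Submodule.smul_mem _ _ (basisFamily_mem_span _)
    · rw [arrow_mul_arrow_of_ne h]
      exact zero_mem _
  · rw [basisFamily_path, ← mul_assoc, arrow_mul_arrow_of_ne (dSrc_ne_one_one a), zero_mul]
    exact zero_mem _

theorem adjoin_range_mk_ι :
    Algebra.adjoin k (Set.range fun g => (mk (FreeAlgebra.ι k g) : DeformedKronecker k N A B)) =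
      ⊤ := by
  rw [Set.range_comp' mk, Algebra.adjoin_image, FreeAlgebra.adjoin_range_ι, Algebra.map_top,
    AlgHom.range_eq_top]
  exact RingQuot.mkAlgHom_surjective k _

theorem span_basisFamily_eq_top : span_basis = ⊤ := by
  refine Submodule.eq_top_of_one_mem_of_generators_mul_mem adjoin_range_mk_ι _ ?_ ?_
  · rw [← sum_vertex]
    exact sum_mem fun v _ => basisFamily_mem_span (.inl v)
  · rintro _ ⟨g, rfl⟩ m hm
    induction hm using Submodule.span_induction with
    | mem _ hb =>
      obtain ⟨i, rfl⟩ := hb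
      rcases g with v | a
      exacts [vertex_mul_basisFamily_mem_span v i, arrow_mul_basisFamily_mem_span a i]
    | zero => rw [mul_zero]; exact zero_mem _
    | add x y _ _ hx hy => rw [mul_add]; exact add_mem hx hy
    | smul r x _ hx => rw [mul_smul_comm]; exact Submodule.smul_mem _ r hx

end Quotient

open Matrix

def target : Index → Fin 2 × Fin 2
  | .inl v => v
  | .inr (.inl a) => dTgt a
  | .inr (.inr _) => (1, 1)

section Representation

variable {k} {N} {A B}

def vertexMat (v : Fin 2 × Fin 2) : Matrix Index Index k :=
  diagonal fun i => if target i = v then 1 else 0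

/-- Left multiplication by an arrow in the basis `deformedKroneckerBasisFamily`: besides
`e_{src} ↦ a`, the arrow `y_t^{(2)}` sends `x_s^{(1)}` to the path `(s, t)`, and `x_s^{(2)}` sends
`y_t^{(1)}` to the right-hand side of the deformed relation. -/
def arrowMat (A B : Fin N → Matrix (Fin 2) (Fin 2) k) :
    Bool × Fin 2 × Fin 2 → Matrix Index Index k
  | (false, s, j) => single (.inr (.inl (false, s, j))) (.inl (0, j)) 1 +
      if j = 1 then
        ∑ t, (single (.inr (.inr (s, t))) (.inr (.inl (true, t, 0))) 1 +
          ∑ u, ∑ v,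
            single (.inr (.inr (u, v))) (.inr (.inl (true, t, 0))) (psiCoeff A B u v s t))
      else 0
  | (true, t, i) => single (.inr (.inl (true, t, i))) (.inl (i, 0)) 1 +
      if i = 1 then ∑ s, single (.inr (.inr (s, t))) (.inr (.inl (false, s, 0))) 1 else 0

theorem vertexMat_mul_vertexMat (v w : Fin 2 × Fin 2) :
    (vertexMat v * vertexMat w : Matrix Index Index k) = if v = w then vertexMat v else 0 := by
  rw [vertexMat, vertexMat, diagonal_mul_diagonal]
  split_ifs with h
  · subst h
    congr 1; funext i; split_ifs <;> simp
  · rw [← diagonal_zero]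
    congr 1; funext i; split_ifs <;> simp_all

theorem sum_vertexMat : ∑ v, (vertexMat v : Matrix Index Index k) = 1 := by
  ext i j
  by_cases h : i = j <;> simp [vertexMat, Matrix.sum_apply, one_apply, h]

theorem vertexMat_mul_single (v : Fin 2 × Fin 2) (i j : Index) (c : k) :
    vertexMat v * single i j c = if target i = v then single i j c else 0 := by
  ext a b
  rw [vertexMat, diagonal_mul]
  by_cases ha : i = a
  · subst ha; split_ifs <;> simp
  · split_ifs <;> simp [single, ha]

theorem single_mul_vertexMat (v : Fin 2 × Fin 2) (i j : Index) (c : k) :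
    single i j c * vertexMat v = if target j = v then single i j c else 0 := by
  ext a b
  rw [vertexMat, mul_diagonal]
  by_cases hb : j = b
  · subst hb; split_ifs <;> simp
  · split_ifs <;> simp [single, hb]

theorem vertexMat_mul_arrowMat_mul_vertexMat (a : Bool × Fin 2 × Fin 2) :
    vertexMat (dTgt a) * arrowMat A B a * vertexMat (dSrc a) = arrowMat A B a := by
  obtain ⟨_ | _, s, j⟩ := a <;> fin_cases j <;>
    simp [arrowMat, mul_add, add_mul, vertexMat_mul_single,
      single_mul_vertexMat, target, dSrc, dTgt]

theorem arrowMat_y_mul_arrowMat_x (s t : Fin 2) :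
    arrowMat A B (true, t, 1) * arrowMat A B (false, s, 0) =
      single (.inr (.inr (s, t))) (.inl (0, 0)) 1 := by
  simp [arrowMat, add_mul, Finset.sum_mul, single_mul_single_eq_ite, -Fin.sum_univ_two]

theorem arrowMat_x_mul_arrowMat_y (s t : Fin 2) :
    arrowMat A B (false, s, 1) * arrowMat A B (true, t, 0) =
      single (.inr (.inr (s, t))) (.inl (0, 0)) 1 +
        ∑ u, ∑ v, single (.inr (.inr (u, v))) (.inl (0, 0)) (psiCoeff A B u v s t) := by
  simp [arrowMat, add_mul, Finset.sum_mul, Finset.sum_add_distrib, single_mul_single_eq_ite,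
    -Fin.sum_univ_two]

noncomputable def generatorMat (A B : Fin N → Matrix (Fin 2) (Fin 2) k) :
    DGen → Matrix Index Index k :=
  Sum.elim vertexMat (arrowMat A B)

theorem lift_generatorMat_dE (v : Fin 2 × Fin 2) :
    FreeAlgebra.lift k (generatorMat A B) (dE k v) = vertexMat v :=
  FreeAlgebra.lift_ι_apply _ _

theorem lift_generatorMat_dA (a : Bool × Fin 2 × Fin 2) :
    FreeAlgebra.lift k (generatorMat A B) (dA k a) = arrowMat A B a :=
  FreeAlgebra.lift_ι_apply _ _

theorem lift_generatorMat_rel ⦃x y : FreeAlgebra k DGen⦄ (h : DRel k N A B x y) :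
    FreeAlgebra.lift k (generatorMat A B) x = FreeAlgebra.lift k (generatorMat A B) y := by
  induction h with
  | idem v => rw [map_mul, lift_generatorMat_dE, vertexMat_mul_vertexMat, if_pos rfl]
  | orth v w h =>
    rw [map_mul, lift_generatorMat_dE, lift_generatorMat_dE, vertexMat_mul_vertexMat, if_neg h,
      map_zero]
  | sum_one => simp only [map_sum, map_one, lift_generatorMat_dE, sum_vertexMat]
  | supp a =>
    simp only [map_mul, lift_generatorMat_dE, lift_generatorMat_dA,
      vertexMat_mul_arrowMat_mul_vertexMat]
  | deform s t =>
    change FreeAlgebra.lift k (generatorMat A B) (dA k (false, s, 1) * dA k (true, t, 0)) =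
      FreeAlgebra.lift k (generatorMat A B) (dA k (true, t, 1) * dA k (false, s, 0) +
        ∑ u, ∑ v, psiCoeff A B u v s t • (dA k (true, v, 1) * dA k (false, u, 0)))
    simp only [map_add, map_sum, map_smul, map_mul, lift_generatorMat_dA,
      arrowMat_x_mul_arrowMat_y, arrowMat_y_mul_arrowMat_x, smul_single, smul_eq_mul, mul_one]

noncomputable def regularRep : DeformedKronecker k N A B →ₐ[k] Matrix Index Index k :=
  RingQuot.liftAlgHom k ⟨FreeAlgebra.lift k (generatorMat A B), lift_generatorMat_rel⟩

theorem regularRep_mk (x : FreeAlgebra k DGen) :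
    regularRep (mk x : DeformedKronecker k N A B) = FreeAlgebra.lift k (generatorMat A B) x :=
  RingQuot.liftAlgHom_mkAlgHom_apply _ _ _ _

/-- The coordinate vector of `1 = ∑ e_v`: a matrix of the regular representation applied to it
returns the coordinates of the represented element. -/
def unitVec : Index → k := Sum.elim 1 0

theorem regularRep_basisFamily_mulVec (i : Index) :
    regularRep (deformedKroneckerBasisFamily k N A B i) *ᵥ unitVec = Pi.single i 1 := by
  rcases i with v | a | ⟨s, t⟩
  · change regularRep (mk (dE k v)) *ᵥ unitVec = _
    rw [regularRep_mk, lift_generatorMat_dE]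
    ext (w | i)
    · by_cases h : w = v <;> simp [vertexMat, mulVec_diagonal, unitVec, target, h]
    · simp [vertexMat, mulVec_diagonal, unitVec]
  · change regularRep (mk (dA k a)) *ᵥ unitVec = _
    rw [regularRep_mk, lift_generatorMat_dA]
    obtain ⟨_ | _, s, j⟩ := a <;> fin_cases j <;>
      simp [arrowMat, add_mulVec, single_mulVec_eq, unitVec]
  · rw [basisFamily_path, map_mul]
    change (regularRep (mk (dA k (true, t, 1))) * regularRep (mk (dA k (false, s, 0)))) *ᵥ
      unitVec = _
    rw [regularRep_mk, regularRep_mk, lift_generatorMat_dA, lift_generatorMat_dA,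
      arrowMat_y_mul_arrowMat_x, single_mulVec_eq]
    simp [unitVec]

theorem linearIndependent_basisFamily :
    LinearIndependent k (deformedKroneckerBasisFamily k N A B) := by
  let coords : DeformedKronecker k N A B →ₗ[k] Index → k :=
    LinearMap.applyₗ unitVec ∘ₗ Matrix.toLin'.toLinearMap ∘ₗ regularRep.toLinearMap
  have hcoords : coords ∘ deformedKroneckerBasisFamily k N A B = Pi.basisFun k Index := by
    funext i
    simp [coords, regularRep_basisFamily_mulVec]
  exact LinearIndependent.of_comp coords (hcoords ▸ (Pi.basisFun k Index).linearIndependent)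

end Representation

end DeformedKronecker

theorem deformedKronecker_dimension_sixteen_general
    (k : Type) [Field k] (N : ℕ) (A B : Fin N → Matrix (Fin 2) (Fin 2) k) :
    Module.finrank k (DeformedKronecker k N A B) = 16 ∧
    LinearIndependent k (deformedKroneckerBasisFamily k N A B) ∧
    Submodule.span k (Set.range (deformedKroneckerBasisFamily k N A B)) = ⊤ := by
  have hli : LinearIndependent k (deformedKroneckerBasisFamily k N A B) :=
    DeformedKronecker.linearIndependent_basisFamily
  have hspan : Submodule.span k (Set.range (deformedKroneckerBasisFamily k N A B)) = ⊤ :=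
    DeformedKronecker.span_basisFamily_eq_top
  refine ⟨?_, hli, hspan⟩
  rw [Module.finrank_eq_card_basis (Module.Basis.mk hli hspan.ge)]
  rfl

/-- For any field `k` and any `Ψ = Σ_m A_m ⊗ B_m ∈ sl₂ ⊗ sl₂`, the deformed
algebra `(Λ⊗Λ)_Ψ` is `16`-dimensional over `k`, with basis given by the four vertex
idempotents, the eight arrows, and the four irreducible paths `y_t^{(2)} x_s^{(1)}`. -/
theorem deformedKronecker_dimension_sixteen
    (k : Type) [Field k] (N : ℕ) (A B : Fin N → Matrix (Fin 2) (Fin 2) k)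
    (hA : ∀ m, (A m).trace = 0) (hB : ∀ m, (B m).trace = 0) :
    Module.finrank k (DeformedKronecker k N A B) = 16 ∧
    LinearIndependent k (deformedKroneckerBasisFamily k N A B) ∧
    Submodule.span k (Set.range (deformedKroneckerBasisFamily k N A B)) = ⊤ :=
  deformedKronecker_dimension_sixteen_general k N A B
end

section
/- Let k be a field of characteristic zero. Let A_1,…,A_N and B_1,…,B_N be traceless 2×2 matrices over k, and set K = Σ_m A_m ⊗ B_m ∈ M₄(k) (sum of Kronecker products). Let c ∈ k and let u₁, u₂, v₁, v₂ be traceless 2×2 matrices over k. Then the equation (I₄ + K)·((u₂ − v₂)⊗I₂ + I₂⊗(u₁ + v₁)) = ((u₂ + v₂)⊗I₂ + I₂⊗(c·I₂ + u₁ − v₁))·(I₄ + K) in M₄(k) (all ⊗ denoting Kronecker products) holds if and only if the following four conditions hold: (1) c = 0; (2) (u₂⊗I₂ + I₂⊗u₁)·K = K·(u₂⊗I₂ + I₂⊗u₁); (3) Σ_m tr(A_m v₂)·B_m = 2v₁; (4) Σ_m tr(B_m v₁)·A_m = 2v₂. -/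
/-!
Expanding both sides and using `XY + YX = tr(XY) • 1` for traceless `2 × 2` matrices, the
equation becomes `[K, U] - c • K = c • 1 + X ⊗ 1 + 1 ⊗ Y` with `U = u₂ ⊗ 1 + 1 ⊗ u₁` and
traceless `X = 2 v₂ - Σ tr(B_m v₁) A_m`, `Y = Σ tr(A_m v₂) B_m - 2 v₁`. This is the splitting
of `End(k² ⊗ k²)` into `k ⊕ sl₂ ⊗ 1 ⊕ 1 ⊗ sl₂ ⊕ sl₂ ⊗ sl₂`: both partial traces kill `K`, hence
the left-hand side, while on the right they recover `c`, `X` and `Y`.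
-/

open Kronecker

namespace Matrix

variable {R : Type*} [CommRing R] {m n : Type*}

def partialTraceRight [Fintype n] : Matrix (m × n) (m × n) R →ₗ[R] Matrix m m R where
  toFun M := of fun i j => ∑ p, M (i, p) (j, p)
  map_add' M N := by ext; simp [Finset.sum_add_distrib]
  map_smul' r M := by ext; simp [Finset.mul_sum]

def partialTraceLeft [Fintype m] : Matrix (m × n) (m × n) R →ₗ[R] Matrix n n R where
  toFun M := of fun i j => ∑ p, M (p, i) (p, j)
  map_add' M N := by ext; simp [Finset.sum_add_distrib]
  map_smul' r M := by ext; simp [Finset.mul_sum]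

@[simp]
theorem partialTraceRight_kronecker [Fintype n] (A : Matrix m m R) (B : Matrix n n R) :
    partialTraceRight (A ⊗ₖ B) = B.trace • A := by
  ext; simp [partialTraceRight, trace, Finset.mul_sum, mul_comm]

@[simp]
theorem partialTraceLeft_kronecker [Fintype m] (A : Matrix m m R) (B : Matrix n n R) :
    partialTraceLeft (A ⊗ₖ B) = A.trace • B := by
  ext; simp [partialTraceLeft, trace, Finset.sum_mul]

@[simp]
theorem partialTraceRight_one [Fintype n] [DecidableEq m] [DecidableEq n] :
    partialTraceRight (1 : Matrix (m × n) (m × n) R) = (Fintype.card n : R) • 1 := by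
  rw [← one_kronecker_one, partialTraceRight_kronecker, trace_one]

@[simp]
theorem partialTraceLeft_one [Fintype m] [DecidableEq m] [DecidableEq n] :
    partialTraceLeft (1 : Matrix (m × n) (m × n) R) = (Fintype.card m : R) • 1 := by
  rw [← one_kronecker_one, partialTraceLeft_kronecker, trace_one]

theorem partialTraceRight_mul_kronecker_one [Fintype m] [Fintype n] [DecidableEq n]
    (M : Matrix (m × n) (m × n) R) (X : Matrix m m R) :
    partialTraceRight (M * (X ⊗ₖ 1)) = partialTraceRight M * X := by
  ext i j
  simp [partialTraceRight, mul_apply, Fintype.sum_prod_type, one_apply, Finset.sum_mul]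
  exact Finset.sum_comm

theorem partialTraceRight_kronecker_one_mul [Fintype m] [Fintype n] [DecidableEq n]
    (M : Matrix (m × n) (m × n) R) (X : Matrix m m R) :
    partialTraceRight ((X ⊗ₖ 1) * M) = X * partialTraceRight M := by
  ext i j
  simp [partialTraceRight, mul_apply, Fintype.sum_prod_type, one_apply, Finset.mul_sum]
  exact Finset.sum_comm

theorem partialTraceRight_mul_one_kronecker [Fintype m] [Fintype n] [DecidableEq m]
    (M : Matrix (m × n) (m × n) R) (Y : Matrix n n R) :
    partialTraceRight (M * (1 ⊗ₖ Y)) = partialTraceRight ((1 ⊗ₖ Y) * M) := by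
  ext i j
  simp [partialTraceRight, mul_apply, Fintype.sum_prod_type, one_apply]
  rw [Finset.sum_comm]
  simp only [mul_comm]

theorem partialTraceLeft_mul_one_kronecker [Fintype m] [Fintype n] [DecidableEq m]
    (M : Matrix (m × n) (m × n) R) (Y : Matrix n n R) :
    partialTraceLeft (M * (1 ⊗ₖ Y)) = partialTraceLeft M * Y := by
  ext i j
  simp [partialTraceLeft, mul_apply, Fintype.sum_prod_type, one_apply, Finset.sum_mul]
  exact Finset.sum_comm

theorem partialTraceLeft_one_kronecker_mul [Fintype m] [Fintype n] [DecidableEq m]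
    (M : Matrix (m × n) (m × n) R) (Y : Matrix n n R) :
    partialTraceLeft ((1 ⊗ₖ Y) * M) = Y * partialTraceLeft M := by
  ext i j
  simp [partialTraceLeft, mul_apply, Fintype.sum_prod_type, one_apply, Finset.mul_sum]
  exact Finset.sum_comm

theorem partialTraceLeft_mul_kronecker_one [Fintype m] [Fintype n] [DecidableEq n]
    (M : Matrix (m × n) (m × n) R) (X : Matrix m m R) :
    partialTraceLeft (M * (X ⊗ₖ 1)) = partialTraceLeft ((X ⊗ₖ 1) * M) := by
  ext i j
  simp [partialTraceLeft, mul_apply, Fintype.sum_prod_type, one_apply]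
  rw [Finset.sum_comm]
  simp only [mul_comm]

section Commutator

variable [Fintype m] [Fintype n] [DecidableEq m] [DecidableEq n]
  (M : Matrix (m × n) (m × n) R) (X : Matrix m m R) (Y : Matrix n n R)

theorem partialTraceRight_commutator_kronecker_sum :
    partialTraceRight (M * (X ⊗ₖ 1 + 1 ⊗ₖ Y) - (X ⊗ₖ 1 + 1 ⊗ₖ Y) * M) =
      partialTraceRight M * X - X * partialTraceRight M := by
  simp only [mul_add, add_mul, map_sub, map_add, partialTraceRight_mul_kronecker_one,
    partialTraceRight_kronecker_one_mul, partialTraceRight_mul_one_kronecker]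
  abel

theorem partialTraceLeft_commutator_kronecker_sum :
    partialTraceLeft (M * (X ⊗ₖ 1 + 1 ⊗ₖ Y) - (X ⊗ₖ 1 + 1 ⊗ₖ Y) * M) =
      partialTraceLeft M * Y - Y * partialTraceLeft M := by
  simp only [mul_add, add_mul, map_sub, map_add, partialTraceLeft_mul_one_kronecker,
    partialTraceLeft_one_kronecker_mul, partialTraceLeft_mul_kronecker_one]
  abel

end Commutator

section Field

variable {k : Type*} [Field k] [CharZero k] [Fintype m] [Fintype n] [DecidableEq m]
  [DecidableEq n] [Nonempty m] [Nonempty n] {c : k} {X : Matrix m m k} {Y : Matrix n n k}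

theorem eq_zero_of_partialTraceRight_eq_zero (hX : X.trace = 0) (hY : Y.trace = 0)
    (h : partialTraceRight (c • 1 + X ⊗ₖ 1 + 1 ⊗ₖ Y) = 0) : c = 0 ∧ X = 0 := by
  simp only [map_add, map_smul, partialTraceRight_one, partialTraceRight_kronecker, trace_one,
    hY, zero_smul, add_zero] at h
  have hc : c = 0 := by
    simpa [hX, Fintype.card_ne_zero] using congrArg trace h
  subst hc
  simpa [Fintype.card_ne_zero] using h

theorem eq_zero_of_partialTraceLeft_eq_zero (hX : X.trace = 0) (hY : Y.trace = 0)
    (h : partialTraceLeft (c • 1 + X ⊗ₖ 1 + 1 ⊗ₖ Y) = 0) : c = 0 ∧ Y = 0 := by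
  simp only [map_add, map_smul, partialTraceLeft_one, partialTraceLeft_kronecker, trace_one,
    hX, zero_smul, add_zero] at h
  have hc : c = 0 := by
    simpa [hY, Fintype.card_ne_zero] using congrArg trace h
  subst hc
  simpa [Fintype.card_ne_zero] using h

end Field

theorem mul_add_mul_eq_trace_smul_one_of_trace_eq_zero {X Y : Matrix (Fin 2) (Fin 2) R}
    (hX : X.trace = 0) (hY : Y.trace = 0) : X * Y + Y * X = (X * Y).trace • 1 := by
  rw [trace_fin_two] at hX hY
  have hX' : X 1 1 = -X 0 0 := eq_neg_of_add_eq_zero_right hX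
  have hY' : Y 1 1 = -Y 0 0 := eq_neg_of_add_eq_zero_right hY
  ext i j
  fin_cases i <;> fin_cases j <;>
    simp [mul_apply, Fin.sum_univ_two, trace_fin_two, hX', hY'] <;> ring


section Kronecker

variable {l p : Type*}

theorem sub_kronecker (A₁ A₂ : Matrix l m R) (B : Matrix n p R) :
    (A₁ - A₂) ⊗ₖ B = A₁ ⊗ₖ B - A₂ ⊗ₖ B := by
  ext; simp [sub_mul]

theorem kronecker_sub (A : Matrix l m R) (B₁ B₂ : Matrix n p R) :
    A ⊗ₖ (B₁ - B₂) = A ⊗ₖ B₁ - A ⊗ₖ B₂ := by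
  ext; simp [mul_sub]

theorem sum_kronecker {ι : Type*} (s : Finset ι) (A : ι → Matrix l m R) (B : Matrix n p R) :
    (∑ i ∈ s, A i) ⊗ₖ B = ∑ i ∈ s, A i ⊗ₖ B := by
  ext; simp [sum_apply, Finset.sum_mul]

theorem kronecker_sum {ι : Type*} (s : Finset ι) (A : Matrix l m R) (B : ι → Matrix n p R) :
    A ⊗ₖ (∑ i ∈ s, B i) = ∑ i ∈ s, A ⊗ₖ B i := by
  ext; simp [sum_apply, Finset.mul_sum]

end Kronecker

section TracelessTwo

variable {ι : Type*} [Fintype ι] {A B : ι → Matrix (Fin 2) (Fin 2) R}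
  {v : Matrix (Fin 2) (Fin 2) R}

theorem kronecker_sum_mul_kronecker_one_add (hA : ∀ i, (A i).trace = 0) (hv : v.trace = 0) :
    (∑ i, A i ⊗ₖ B i) * (v ⊗ₖ 1) + (v ⊗ₖ 1) * (∑ i, A i ⊗ₖ B i) =
      1 ⊗ₖ ∑ i, (A i * v).trace • B i := by
  rw [Finset.sum_mul, Finset.mul_sum, ← Finset.sum_add_distrib, kronecker_sum]
  refine Finset.sum_congr rfl fun i _ => ?_
  rw [← mul_kronecker_mul, ← mul_kronecker_mul, mul_one, one_mul, ← add_kronecker,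
    mul_add_mul_eq_trace_smul_one_of_trace_eq_zero (hA i) hv, smul_kronecker, kronecker_smul]

theorem kronecker_sum_mul_one_kronecker_add (hB : ∀ i, (B i).trace = 0) (hv : v.trace = 0) :
    (∑ i, A i ⊗ₖ B i) * (1 ⊗ₖ v) + (1 ⊗ₖ v) * (∑ i, A i ⊗ₖ B i) =
      (∑ i, (B i * v).trace • A i) ⊗ₖ 1 := by
  rw [Finset.sum_mul, Finset.mul_sum, ← Finset.sum_add_distrib, sum_kronecker]
  refine Finset.sum_congr rfl fun i _ => ?_
  rw [← mul_kronecker_mul, ← mul_kronecker_mul, mul_one, one_mul, ← kronecker_add,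
    mul_add_mul_eq_trace_smul_one_of_trace_eq_zero (hB i) hv, kronecker_smul, smul_kronecker]

end TracelessTwo

theorem one_add_mul_eq_mul_one_add_iff [Fintype m] [Fintype n] [DecidableEq m] [DecidableEq n]
    {K : Matrix (m × n) (m × n) R} {c : R} {u₁ v₁ sB : Matrix n n R} {u₂ v₂ sA : Matrix m m R}
    (h₁ : K * (1 ⊗ₖ v₁) + (1 ⊗ₖ v₁) * K = sA ⊗ₖ 1)
    (h₂ : K * (v₂ ⊗ₖ 1) + (v₂ ⊗ₖ 1) * K = 1 ⊗ₖ sB) :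
    (1 + K) * ((u₂ - v₂) ⊗ₖ 1 + 1 ⊗ₖ (u₁ + v₁)) =
        ((u₂ + v₂) ⊗ₖ 1 + 1 ⊗ₖ (c • 1 + u₁ - v₁)) * (1 + K) ↔
      K * (u₂ ⊗ₖ 1 + 1 ⊗ₖ u₁) - (u₂ ⊗ₖ 1 + 1 ⊗ₖ u₁) * K - c • K =
        c • 1 + ((2 : R) • v₂ - sA) ⊗ₖ 1 + 1 ⊗ₖ (sB - (2 : R) • v₁) := by
  rw [← sub_eq_zero, ← sub_eq_zero (a := K * _ - _ - _)]
  refine Eq.congr_left ?_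
  simp only [sub_kronecker, kronecker_sub, add_kronecker, kronecker_add, smul_kronecker,
    kronecker_smul, one_kronecker_one, mul_add, add_mul, mul_sub, sub_mul, one_mul, mul_one,
    smul_mul_assoc, eq_sub_of_add_eq h₁, eq_sub_of_add_eq h₂]
  module

end Matrix

theorem kernel_characterization_deformed_kronecker_general
    (k : Type) [Field k] [CharZero k] (N : ℕ) (A B : Fin N → Matrix (Fin 2) (Fin 2) k)
    (hA : ∀ m, (A m).trace = 0) (hB : ∀ m, (B m).trace = 0)
    (c : k) (u₁ u₂ v₁ v₂ : Matrix (Fin 2) (Fin 2) k)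
    (hv₁ : v₁.trace = 0) (hv₂ : v₂.trace = 0) :
    ((1 : Matrix (Fin 2 × Fin 2) (Fin 2 × Fin 2) k) + ∑ m, A m ⊗ₖ B m) *
        ((u₂ - v₂) ⊗ₖ (1 : Matrix (Fin 2) (Fin 2) k) +
          (1 : Matrix (Fin 2) (Fin 2) k) ⊗ₖ (u₁ + v₁)) =
      ((u₂ + v₂) ⊗ₖ (1 : Matrix (Fin 2) (Fin 2) k) +
          (1 : Matrix (Fin 2) (Fin 2) k) ⊗ₖ
            (c • (1 : Matrix (Fin 2) (Fin 2) k) + u₁ - v₁)) *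
        ((1 : Matrix (Fin 2 × Fin 2) (Fin 2 × Fin 2) k) + ∑ m, A m ⊗ₖ B m) ↔
      c = 0 ∧
      (u₂ ⊗ₖ (1 : Matrix (Fin 2) (Fin 2) k) + (1 : Matrix (Fin 2) (Fin 2) k) ⊗ₖ u₁) *
          (∑ m, A m ⊗ₖ B m) =
        (∑ m, A m ⊗ₖ B m) *
          (u₂ ⊗ₖ (1 : Matrix (Fin 2) (Fin 2) k) + (1 : Matrix (Fin 2) (Fin 2) k) ⊗ₖ u₁) ∧
      ∑ m, (A m * v₂).trace • B m = (2 : k) • v₁ ∧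
      ∑ m, (B m * v₁).trace • A m = (2 : k) • v₂ := by
  rw [Matrix.one_add_mul_eq_mul_one_add_iff (Matrix.kronecker_sum_mul_one_kronecker_add hB hv₁)
    (Matrix.kronecker_sum_mul_kronecker_one_add hA hv₂)]
  set K := ∑ m, A m ⊗ₖ B m
  set U := u₂ ⊗ₖ (1 : Matrix (Fin 2) (Fin 2) k) + (1 : Matrix (Fin 2) (Fin 2) k) ⊗ₖ u₁
  have hKR : Matrix.partialTraceRight K = 0 := by simp [K, hB]
  have hKL : Matrix.partialTraceLeft K = 0 := by simp [K, hA]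
  have hR : Matrix.partialTraceRight (K * U - U * K - c • K) = 0 := by
    rw [map_sub, Matrix.partialTraceRight_commutator_kronecker_sum, map_smul, hKR]; simp
  have hL : Matrix.partialTraceLeft (K * U - U * K - c • K) = 0 := by
    rw [map_sub, Matrix.partialTraceLeft_commutator_kronecker_sum, map_smul, hKL]; simp
  have hX : ((2 : k) • v₂ - ∑ m, (B m * v₁).trace • A m).trace = 0 := by
    simp [Matrix.trace_sum, hA, hv₂]
  have hY : (∑ m, (A m * v₂).trace • B m - (2 : k) • v₁).trace = 0 := by
    simp [Matrix.trace_sum, hB, hv₁]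
  constructor
  · intro h
    obtain ⟨rfl, hX₀⟩ := Matrix.eq_zero_of_partialTraceRight_eq_zero hX hY (h ▸ hR)
    obtain ⟨-, hY₀⟩ := Matrix.eq_zero_of_partialTraceLeft_eq_zero hX hY (h ▸ hL)
    rw [hX₀, hY₀] at h
    refine ⟨rfl, ?_, sub_eq_zero.mp hY₀, (sub_eq_zero.mp hX₀).symm⟩
    exact (sub_eq_zero.mp (by simpa using h)).symm
  · rintro ⟨rfl, hcomm, hsB, hsA⟩
    simp [hsA, hsB, hcomm]

/-- Let `k` be a field of characteristic zero, let `A_m, B_m` be traceless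
`2 × 2` matrices over `k`, and `K = Σ_m A_m ⊗ B_m` (Kronecker products).  For `c ∈ k` and
traceless `2 × 2` matrices `u₁, u₂, v₁, v₂`, the equation
`(I₄ + K)((u₂ − v₂) ⊗ I₂ + I₂ ⊗ (u₁ + v₁)) = ((u₂ + v₂) ⊗ I₂ + I₂ ⊗ (c I₂ + u₁ − v₁))(I₄ + K)`
holds iff `c = 0`, `(u₂ ⊗ I₂ + I₂ ⊗ u₁)` commutes with `K`, `Σ_m tr(A_m v₂) B_m = 2 v₁`,
and `Σ_m tr(B_m v₁) A_m = 2 v₂`. -/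
theorem kernel_characterization_deformed_kronecker
    (k : Type) [Field k] [CharZero k] (N : ℕ) (A B : Fin N → Matrix (Fin 2) (Fin 2) k)
    (hA : ∀ m, (A m).trace = 0) (hB : ∀ m, (B m).trace = 0)
    (c : k) (u₁ u₂ v₁ v₂ : Matrix (Fin 2) (Fin 2) k)
    (hu₁ : u₁.trace = 0) (hu₂ : u₂.trace = 0) (hv₁ : v₁.trace = 0) (hv₂ : v₂.trace = 0) :
    ((1 : Matrix (Fin 2 × Fin 2) (Fin 2 × Fin 2) k) + ∑ m, A m ⊗ₖ B m) *
        ((u₂ - v₂) ⊗ₖ (1 : Matrix (Fin 2) (Fin 2) k) +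
          (1 : Matrix (Fin 2) (Fin 2) k) ⊗ₖ (u₁ + v₁)) =
      ((u₂ + v₂) ⊗ₖ (1 : Matrix (Fin 2) (Fin 2) k) +
          (1 : Matrix (Fin 2) (Fin 2) k) ⊗ₖ
            (c • (1 : Matrix (Fin 2) (Fin 2) k) + u₁ - v₁)) *
        ((1 : Matrix (Fin 2 × Fin 2) (Fin 2 × Fin 2) k) + ∑ m, A m ⊗ₖ B m) ↔
      c = 0 ∧
      (u₂ ⊗ₖ (1 : Matrix (Fin 2) (Fin 2) k) + (1 : Matrix (Fin 2) (Fin 2) k) ⊗ₖ u₁) *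
          (∑ m, A m ⊗ₖ B m) =
        (∑ m, A m ⊗ₖ B m) *
          (u₂ ⊗ₖ (1 : Matrix (Fin 2) (Fin 2) k) + (1 : Matrix (Fin 2) (Fin 2) k) ⊗ₖ u₁) ∧
      ∑ m, (A m * v₂).trace • B m = (2 : k) • v₁ ∧
      ∑ m, (B m * v₁).trace • A m = (2 : k) • v₂ :=
  kernel_characterization_deformed_kronecker_general k N A B hA hB c u₁ u₂ v₁ v₂ hv₁ hv₂
end
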